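/- arXiv:2010.10461 — 3 statements merged into one kernel-verified Lean document; each statement's English description precedes it below -/
import Mathlib

section
/- Let N ≥ 1, let Ω ⊆ {0,…,N−1}, let M ∈ ℂ^{M×N}, and let x* = ∑_{k=1}^p c_k a(τ_k) with p ≥ 1, amplitudes c_k > 0 and pairwise distinct τ_1,…,τ_p ∈ [0,1). Suppose there exist q ∈ ℂ^N and finitely many vectors u_1,…,u_m ∈ ℂ^M such that, writing Q(τ) = ∑_{n=0}^{N−1} q_n e^{−2πinτ} and P_i(τ) = ∑_{n=0}^{N−1} (M^H u_i)_n e^{−2πinτ}: (i) Re(Q(τ_k)) = 1 for k = 1,…,p; (ii) q_j = 0 for every j ∉ Ω; (iii) 1 − Re(Q(τ)) = ∑_{i=1}^m |P_i(τ)|² for all τ ∈ [0,1). Then x* is a minimizer of the compressed ANM program: for every x ∈ ℂ^N with x_j = x*_j for all j ∈ Ω and M T(x) M^H positive semidefinite, one has Re(x_0) ≥ Re(x*_0) = ∑_{k=1}^p c_k. -/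
open Complex Matrix BigOperators
open scoped ComplexOrder

/-- The complex exponential atom `a(τ) ∈ ℂ^N`, with `a(τ)ₙ = exp(2πinτ)`. -/
noncomputable def atom (N : ℕ) (τ : ℝ) : Fin N → ℂ :=
  fun n => Complex.exp (2 * Real.pi * Complex.I * (n : ℕ) * τ)

/-- The trigonometric polynomial `τ ↦ ∑ₙ qₙ exp(−2πinτ)` with coefficients `q ∈ ℂ^N`. -/
noncomputable def trigPoly {N : ℕ} (q : Fin N → ℂ) (τ : ℝ) : ℂ :=
  ∑ n : Fin N, q n * Complex.exp (-(2 * Real.pi * Complex.I * (n : ℕ) * τ))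

/-- The Hermitian Toeplitz matrix `T(x)` whose first column is `x`. -/
noncomputable def Toep {N : ℕ} (x : Fin N → ℂ) : Matrix (Fin N) (Fin N) ℂ :=
  fun m n =>
    if (n : ℕ) ≤ (m : ℕ) then
      x ⟨(m : ℕ) - (n : ℕ), Nat.lt_of_le_of_lt (Nat.sub_le _ _) m.isLt⟩
    else
      star (x ⟨(n : ℕ) - (m : ℕ), Nat.lt_of_le_of_lt (Nat.sub_le _ _) n.isLt⟩)

/-! For `v = Mᴴ u` and any `x`, `Re (vᴴ T(x) v)` is a real pairing `⟪x, σ_v⟫` of `x` with the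
coefficient vector `σ_v` of `|P_v|²`, viewed as `Re` of a trigonometric polynomial; the pairing
sees the constant coefficient only through its real part, just as `Re` of the polynomial does.
Such a real trigonometric polynomial of degree `< N` is determined by its values on a grid of
`2N` points of `[0, 1)` (orthogonality of roots of unity), so certificate (iii), which says
`∑ᵢ |P_{vᵢ}|² + Re Q ≡ 1`, gives `⟪x, ∑ᵢ σ_{vᵢ} + q⟫ = Re x₀` for every `x`. Hence
`0 ≤ ∑ᵢ Re (vᵢᴴ T(x) vᵢ) = Re x₀ - ⟪x, q⟫` for feasible `x`.
Since `q` lives on `Ω`, where `x = x*`, we get `⟪x, q⟫ = ⟪x*, q⟫ = ∑ₖ cₖ Re Q(τₖ) = ∑ₖ cₖ`. -/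

open scoped Real ComplexConjugate

noncomputable def expTwoPiI (t : ℝ) : ℂ := exp (2 * π * I * t)

theorem expTwoPiI_add (s t : ℝ) : expTwoPiI (s + t) = expTwoPiI s * expTwoPiI t := by
  simp only [expTwoPiI, ← Complex.exp_add, ofReal_add]; ring_nf

theorem conj_expTwoPiI (t : ℝ) : conj (expTwoPiI t) = expTwoPiI (-t) := by
  simp only [expTwoPiI, ← Complex.exp_conj, map_mul, conj_ofReal, conj_I, map_ofNat, ofReal_neg]
  ring_nf

theorem sum_expTwoPiI_intCast_mul_eq_ite {L : ℕ} {k : ℤ} (hk : |k| < L) :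
    ∑ j : Fin L, expTwoPiI (k * (j / L)) = if k = 0 then (L : ℂ) else 0 := by
  split_ifs with hk0
  · simp [hk0, expTwoPiI]
  have hL : L ≠ 0 := by rintro rfl; exact (abs_nonneg k).not_gt hk
  have hζ := Complex.isPrimitiveRoot_exp L hL
  set w := exp (2 * π * I / L) ^ k
  have hw : w ≠ 1 := fun h => hk0 (Int.eq_zero_of_abs_lt_dvd ((hζ.zpow_eq_one_iff_dvd k).1 h) hk)
  have hwL : w ^ L = 1 := by
    rw [← zpow_natCast, ← _root_.zpow_mul, mul_comm k, _root_.zpow_mul, zpow_natCast,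
      hζ.pow_eq_one, _root_.one_zpow]
  have hpow (j : ℕ) : expTwoPiI (k * (j / L)) = w ^ j := by
    rw [← zpow_natCast, ← _root_.zpow_mul, ← Complex.exp_int_mul, expTwoPiI]
    congr 1; push_cast; field_simp
  rw [Fin.sum_univ_eq_sum_range (fun j => expTwoPiI (k * (j / L))), Finset.sum_congr rfl
    fun j _ => hpow j, geom_sum_eq hw, hwL, sub_self, zero_div]

theorem sum_sum_mul_expTwoPiI {ι : Type*} (s : Finset ι) (c : ι → ℂ) (k : ι → ℤ) {L : ℕ}
    (hk : ∀ i ∈ s, |k i| < L) :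
    ∑ j : Fin L, ∑ i ∈ s, c i * expTwoPiI (k i * (j / L)) = L * ∑ i ∈ s with k i = 0, c i := by
  rw [Finset.sum_comm, Finset.sum_filter, Finset.mul_sum]
  refine Finset.sum_congr rfl fun i hi => ?_
  rw [← Finset.mul_sum, sum_expTwoPiI_intCast_mul_eq_ite (hk i hi)]
  split_ifs <;> ring

theorem trigPoly_eq_sum {N : ℕ} (b : Fin N → ℂ) (t : ℝ) :
    trigPoly b t = ∑ n, b n * expTwoPiI (-(n * t)) := by
  refine Finset.sum_congr rfl fun n _ => ?_
  simp only [expTwoPiI]; congr 2; push_cast; ring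

theorem trigPoly_sum {N : ℕ} {ι : Type*} (s : Finset ι) (b : ι → Fin N → ℂ) (t : ℝ) :
    trigPoly (∑ i ∈ s, b i) t = ∑ i ∈ s, trigPoly (b i) t := by
  simp only [trigPoly, Finset.sum_apply, Finset.sum_mul]
  exact Finset.sum_comm

theorem trigPoly_add {N : ℕ} (b b' : Fin N → ℂ) (t : ℝ) :
    trigPoly (b + b') t = trigPoly b t + trigPoly b' t := by
  simp only [trigPoly, Pi.add_apply, add_mul, Finset.sum_add_distrib]

theorem trigPoly_single {N : ℕ} (d : Fin N) (c : ℂ) (t : ℝ) :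
    trigPoly (Pi.single d c) t = c * expTwoPiI (-(d * t)) := by
  rw [trigPoly_eq_sum, Fintype.sum_eq_single d fun n hn => by simp [hn], Pi.single_eq_same]

theorem sum_re_trigPoly_mul_expTwoPiI {N L : ℕ} (hL : 2 * N ≤ L + 1) (b : Fin N → ℂ)
    (d : Fin N) :
    ∑ j : Fin L, ((trigPoly b (j / L)).re : ℂ) * expTwoPiI (d * (j / L)) =
      L / 2 * (b d + if (d : ℕ) = 0 then conj (b d) else 0) := by
  have hd := d.isLt
  have hfirst : ∑ j : Fin L, trigPoly b (j / L) * expTwoPiI (d * (j / L)) = L * b d := by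
    have hfilter : (Finset.univ.filter fun n : Fin N => ((d : ℕ) : ℤ) - (n : ℕ) = 0) = {d} := by
      ext n; simp [Fin.ext_iff, sub_eq_zero, eq_comm]
    rw [← Finset.sum_singleton b d, ← hfilter, ← sum_sum_mul_expTwoPiI _ _ _ (L := L)
      fun n _ => abs_lt.2 ⟨by omega, by omega⟩]
    refine Finset.sum_congr rfl fun j _ => ?_
    rw [trigPoly_eq_sum, Finset.sum_mul]
    refine Finset.sum_congr rfl fun n _ => ?_
    rw [mul_assoc, ← expTwoPiI_add]; push_cast; ring_nf
  have hsecond : ∑ j : Fin L, conj (trigPoly b (j / L)) * expTwoPiI (d * (j / L)) =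
      L * if (d : ℕ) = 0 then conj (b d) else 0 := by
    have hfilter : (Finset.univ.filter fun n : Fin N => ((n : ℕ) : ℤ) + d = 0) =
        if (d : ℕ) = 0 then {d} else ∅ := by
      ext n; split_ifs <;> simp [Fin.ext_iff] <;> omega
    have hsum : (if (d : ℕ) = 0 then conj (b d) else 0) =
        ∑ n ∈ Finset.univ.filter (fun n : Fin N => ((n : ℕ) : ℤ) + d = 0), conj (b n) := by
      rw [hfilter]; split_ifs <;> simp
    rw [hsum, ← sum_sum_mul_expTwoPiI _ _ (fun n : Fin N => ((n : ℕ) : ℤ) + d) (L := L)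
      fun n _ => abs_lt.2 ⟨by omega, by omega⟩]
    refine Finset.sum_congr rfl fun j _ => ?_
    rw [trigPoly_eq_sum, map_sum, Finset.sum_mul]
    refine Finset.sum_congr rfl fun n _ => ?_
    rw [map_mul, conj_expTwoPiI, mul_assoc, ← expTwoPiI_add]; push_cast; ring_nf
  simp only [re_eq_add_conj, add_mul, div_mul_eq_mul_div, ← Finset.sum_div, Finset.sum_add_distrib,
    hfirst, hsecond]
  ring

noncomputable def toeplitzPairing {N : ℕ} (y : Fin N → ℂ) : (Fin N → ℂ) →+ ℝ where
  toFun b := ∑ d : Fin N, if (d : ℕ) = 0 then (y d).re * (b d).re else (y d * conj (b d)).re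
  map_zero' := by simp
  map_add' b b' := by
    rw [← Finset.sum_add_distrib]
    refine Finset.sum_congr rfl fun d _ => ?_
    split_ifs <;> simp [mul_add]

theorem toeplitzPairing_apply {N : ℕ} (y b : Fin N → ℂ) :
    toeplitzPairing y b =
      ∑ d : Fin N, if (d : ℕ) = 0 then (y d).re * (b d).re else (y d * conj (b d)).re := rfl

theorem toeplitzPairing_single {N : ℕ} (y : Fin N → ℂ) (d : Fin N) (c : ℂ) :
    toeplitzPairing y (Pi.single d c) =
      if (d : ℕ) = 0 then (y d).re * c.re else (y d * conj c).re := by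
  rw [toeplitzPairing_apply, Fintype.sum_eq_single d fun n hn => by simp [hn], Pi.single_eq_same]

theorem toeplitzPairing_eq_of_re_trigPoly_eqOn {N : ℕ} {b b' : Fin N → ℂ}
    (h : ∀ t ∈ Set.Ico (0 : ℝ) 1, (trigPoly b t).re = (trigPoly b' t).re) (y : Fin N → ℂ) :
    toeplitzPairing y b = toeplitzPairing y b' := by
  have hcoeff (d : Fin N) : b d + (if (d : ℕ) = 0 then conj (b d) else 0) =
      b' d + if (d : ℕ) = 0 then conj (b' d) else 0 := by
    have hN : (N : ℂ) ≠ 0 := Nat.cast_ne_zero.2 (Fin.pos d).ne'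
    have hgrid (j : Fin (2 * N)) : ((j : ℕ) / (2 * N : ℕ) : ℝ) ∈ Set.Ico (0 : ℝ) 1 :=
      ⟨by positivity, (div_lt_one (by exact_mod_cast j.pos)).2 (by exact_mod_cast j.isLt)⟩
    have := sum_re_trigPoly_mul_expTwoPiI (L := 2 * N) (by omega) b d
    rw [Finset.sum_congr rfl fun j _ => by rw [h _ (hgrid j)],
      sum_re_trigPoly_mul_expTwoPiI (by omega) b' d] at this
    push_cast at this
    exact (mul_left_cancel₀ (by simpa using hN) this).symm
  rw [toeplitzPairing_apply, toeplitzPairing_apply]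
  refine Finset.sum_congr rfl fun d _ => ?_
  split_ifs with hd
  · have := congrArg re (hcoeff d)
    simp only [hd, if_true, add_re, conj_re] at this
    rw [show (b d).re = (b' d).re by linarith]
  · simpa [hd] using congrArg (fun w => (y d * conj w).re) (hcoeff d)

-- `‖trigPoly v‖ ^ 2` is real, so its coefficient at a negative lag can be conjugated and moved
-- to the opposite lag.
noncomputable def autocorr {N : ℕ} (v : Fin N → ℂ) : Fin N → ℂ :=
  ∑ m : Fin N, ∑ n : Fin N,
    if (n : ℕ) ≤ m then
      Pi.single ⟨m - n, Nat.lt_of_le_of_lt (Nat.sub_le _ _) m.isLt⟩ (v m * conj (v n))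
    else
      Pi.single ⟨n - m, Nat.lt_of_le_of_lt (Nat.sub_le _ _) n.isLt⟩ (v n * conj (v m))

theorem norm_trigPoly_sq {N : ℕ} (v : Fin N → ℂ) (t : ℝ) :
    ‖trigPoly v t‖ ^ 2 = (trigPoly (autocorr v) t).re := by
  rw [← normSq_eq_norm_sq, ← ofReal_re (normSq (trigPoly v t)), ← mul_conj, trigPoly_eq_sum,
    map_sum, Finset.sum_mul_sum, autocorr]
  simp only [trigPoly_sum, Complex.re_sum]
  refine Finset.sum_congr rfl fun m _ => Finset.sum_congr rfl fun n _ => ?_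
  split_ifs with hnm
  · rw [trigPoly_single, map_mul, conj_expTwoPiI]
    congr 1
    rw [mul_mul_mul_comm, ← expTwoPiI_add]; push_cast [hnm]; ring_nf
  · rw [trigPoly_single, ← conj_re, map_mul, map_mul, conj_expTwoPiI, conj_conj]
    congr 1
    rw [mul_mul_mul_comm, ← expTwoPiI_add]; push_cast [(not_le.1 hnm).le]; ring_nf

theorem re_star_dotProduct_toep_mulVec {N : ℕ} (x v : Fin N → ℂ) :
    (star v ⬝ᵥ (Toep x *ᵥ v)).re = toeplitzPairing x (autocorr v) := by
  rw [autocorr, map_sum, dotProduct, Complex.re_sum]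
  refine Finset.sum_congr rfl fun m _ => ?_
  rw [map_sum, mulVec, dotProduct, Finset.mul_sum, Complex.re_sum]
  refine Finset.sum_congr rfl fun n _ => ?_
  simp only [Toep, Pi.star_apply, Complex.star_def]
  split_ifs with hnm <;> rw [toeplitzPairing_single] <;> split_ifs with hlag
  · obtain rfl : m = n := Fin.ext (by simp at hlag; omega)
    rw [mul_conj, ofReal_re, mul_left_comm, mul_comm (conj _), mul_conj, re_mul_ofReal]
  · rw [map_mul, conj_conj]; ring_nf
  · simp at hlag; omega
  · rw [← conj_re, map_mul, map_mul, map_mul, conj_conj, conj_conj]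
    ring_nf

theorem toeplitzPairing_autocorr_nonneg {N K : ℕ} {x : Fin N → ℂ} {M : Matrix (Fin K) (Fin N) ℂ}
    (hpsd : (M * Toep x * Mᴴ).PosSemidef) (u : Fin K → ℂ) :
    0 ≤ toeplitzPairing x (autocorr (Mᴴ *ᵥ u)) := by
  have h := hpsd.dotProduct_mulVec_nonneg u
  rw [← mulVec_mulVec, ← mulVec_mulVec, dotProduct_mulVec,
    show star u ᵥ* M = star (Mᴴ *ᵥ u) by rw [star_mulVec, conjTranspose_conjTranspose]] at h
  rw [← re_star_dotProduct_toep_mulVec]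
  exact (Complex.nonneg_iff.1 h).1

theorem toeplitzPairing_congr {N : ℕ} {x y b : Fin N → ℂ} {Ω : Finset (Fin N)}
    (hxy : ∀ j ∈ Ω, x j = y j) (hb : ∀ j ∉ Ω, b j = 0) :
    toeplitzPairing x b = toeplitzPairing y b := by
  simp only [toeplitzPairing_apply]
  refine Finset.sum_congr rfl fun d _ => ?_
  by_cases hd : d ∈ Ω
  · rw [hxy d hd]
  · simp [hb d hd]

theorem star_dotProduct_atom {N : ℕ} (b : Fin N → ℂ) (τ : ℝ) :
    star b ⬝ᵥ atom N τ = conj (trigPoly b τ) := by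
  rw [trigPoly_eq_sum, map_sum, dotProduct]
  refine Finset.sum_congr rfl fun n _ => ?_
  rw [map_mul, conj_expTwoPiI, neg_neg, Pi.star_apply, Complex.star_def, atom, expTwoPiI]
  push_cast; ring_nf

theorem toeplitzPairing_sum_smul_atom {N : ℕ} {ι : Type*} (s : Finset ι) (c τ : ι → ℝ)
    (b : Fin N → ℂ) :
    toeplitzPairing (∑ k ∈ s, (c k : ℂ) • atom N (τ k)) b =
      ∑ k ∈ s, c k * (trigPoly b (τ k)).re := by
  have hdot : ∑ k ∈ s, c k * (trigPoly b (τ k)).re =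
      (star b ⬝ᵥ ∑ k ∈ s, (c k : ℂ) • atom N (τ k)).re := by
    rw [dotProduct_sum, Complex.re_sum]
    refine Finset.sum_congr rfl fun k _ => ?_
    rw [dotProduct_smul, smul_eq_mul, star_dotProduct_atom, re_ofReal_mul, conj_re]
  rw [hdot, toeplitzPairing_apply, dotProduct, Complex.re_sum]
  refine Finset.sum_congr rfl fun d _ => ?_
  split_ifs with hd
  · have hreal : (∑ k ∈ s, (c k : ℂ) • atom N (τ k)) d = ((∑ k ∈ s, c k : ℝ) : ℂ) := by
      simp [Finset.sum_apply, atom, hd]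
    rw [hreal, Pi.star_apply, Complex.star_def, mul_comm (conj _), re_ofReal_mul, conj_re,
      ofReal_re, mul_comm]
  · rw [Pi.star_apply, Complex.star_def, mul_comm]

theorem dual_certificate_implies_minimizer_general
    (N M' p m : ℕ) (hN : 0 < N)
    (Ω : Finset (Fin N))
    (M : Matrix (Fin M') (Fin N) ℂ)
    (τ : Fin p → ℝ)
    (c : Fin p → ℝ)
    (xstar : Fin N → ℂ)
    (hx : xstar = ∑ k : Fin p, (c k : ℂ) • atom N (τ k))
    (q : Fin N → ℂ) (u : Fin m → Fin M' → ℂ)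
    (h2 : ∀ k : Fin p, (trigPoly q (τ k)).re = 1)
    (h3 : ∀ j : Fin N, j ∉ Ω → q j = 0)
    (h4 : ∀ t ∈ Set.Ico (0 : ℝ) 1,
      1 - (trigPoly q t).re = ∑ i : Fin m, ‖trigPoly (Mᴴ *ᵥ u i) t‖ ^ 2) :
    (∀ x : Fin N → ℂ,
      (∀ j ∈ Ω, x j = xstar j) →
      (M * Toep x * Mᴴ).PosSemidef →
      (xstar ⟨0, hN⟩).re ≤ (x ⟨0, hN⟩).re) ∧
    (xstar ⟨0, hN⟩).re = ∑ k : Fin p, c k := by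
  have hstar0 : xstar ⟨0, hN⟩ = ((∑ k, c k : ℝ) : ℂ) := by simp [hx, Finset.sum_apply, atom]
  refine ⟨fun x hxΩ hpsd => ?_, by rw [hstar0, ofReal_re]⟩
  have hcert : toeplitzPairing x (∑ i, autocorr (Mᴴ *ᵥ u i) + q) =
      toeplitzPairing x (Pi.single ⟨0, hN⟩ 1) :=
    toeplitzPairing_eq_of_re_trigPoly_eqOn (fun t ht => by
      simp [trigPoly_add, trigPoly_sum, ← norm_trigPoly_sq, trigPoly_single, expTwoPiI,
        ← h4 t ht]) x
  have hq : toeplitzPairing x q = ∑ k, c k := by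
    rw [toeplitzPairing_congr hxΩ h3, hx, toeplitzPairing_sum_smul_atom]
    simp [h2]
  have hpos : 0 ≤ ∑ i, toeplitzPairing x (autocorr (Mᴴ *ᵥ u i)) :=
    Finset.sum_nonneg fun i _ => toeplitzPairing_autocorr_nonneg hpsd (u i)
  rw [map_add, map_sum, hq, toeplitzPairing_single, if_pos rfl, one_re, mul_one] at hcert
  rw [hstar0, ofReal_re]
  linarith

theorem dual_certificate_implies_minimizer
    (N M' p m : ℕ) (hN : 0 < N) (hp : 0 < p)
    (Ω : Finset (Fin N))
    (M : Matrix (Fin M') (Fin N) ℂ)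
    (τ : Fin p → ℝ) (hτ : ∀ k, τ k ∈ Set.Ico (0 : ℝ) 1)
    (hinj : Function.Injective τ)
    (c : Fin p → ℝ) (hc : ∀ k, 0 < c k)
    (xstar : Fin N → ℂ)
    (hx : xstar = ∑ k : Fin p, (c k : ℂ) • atom N (τ k))
    (q : Fin N → ℂ) (u : Fin m → Fin M' → ℂ)
    (h2 : ∀ k : Fin p, (trigPoly q (τ k)).re = 1)
    (h3 : ∀ j : Fin N, j ∉ Ω → q j = 0)
    (h4 : ∀ t ∈ Set.Ico (0 : ℝ) 1,
      1 - (trigPoly q t).re = ∑ i : Fin m, ‖trigPoly (Mᴴ *ᵥ u i) t‖ ^ 2) :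
    (∀ x : Fin N → ℂ,
      (∀ j ∈ Ω, x j = xstar j) →
      (M * Toep x * Mᴴ).PosSemidef →
      (xstar ⟨0, hN⟩).re ≤ (x ⟨0, hN⟩).re) ∧
    (xstar ⟨0, hN⟩).re = ∑ k : Fin p, c k :=
  dual_certificate_implies_minimizer_general N M' p m hN Ω M τ c xstar hx q u h2 h3 h4
end

section
/- Let N ≥ 1, let Ω ⊆ {0,…,N−1}, let M ∈ ℂ^{M×N}, and let x* = ∑_{k=1}^p c_k a(τ_k) with p ≥ 1, amplitudes c_k > 0 and pairwise distinct τ_1,…,τ_p ∈ [0,1). Suppose there exist q ∈ ℂ^N and finitely many vectors u_1,…,u_m ∈ ℂ^M satisfying, with Q(τ) = ∑_{n=0}^{N−1} q_n e^{−2πinτ} and P_i(τ) = ∑_{n=0}^{N−1} (M^H u_i)_n e^{−2πinτ}: Re(Q(τ_k)) = 1 for k = 1,…,p; q_j = 0 for j ∉ Ω; and 1 − Re(Q(τ)) = ∑_{i=1}^m |P_i(τ)|² for all τ ∈ [0,1). If x̃ = ∑_{k=1}^{p̃} c̃_k a(τ̃_k) with c̃_k > 0 and τ̃_k ∈ [0,1)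 satisfies x̃_j = x*_j for all j ∈ Ω, M T(x̃) M^H positive semidefinite, and Re(x̃_0) = Re(x*_0), then Re(Q(τ̃_k)) = 1 for every k = 1,…,p̃. -/
open Complex Matrix BigOperators
open scoped ComplexOrder

/-!
Pairing `q` with `x̃ = ∑ c̃ₖ a(τ̃ₖ)` gives `∑ c̃ₖ Q(τ̃ₖ)`. Since `q` is supported on `Ω`, where `x̃`
and `x*` agree, this equals the pairing with `x*`, whose real part is `∑ cₖ`. The condition on the
zeroth entry says `∑ c̃ₖ = ∑ cₖ`, so `∑ c̃ₖ (1 - Re Q(τ̃ₖ)) = 0`, and every term is nonnegative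
because `1 - Re Q` is a sum of squares.
-/

lemma trigPoly_eq_dotProduct_star_atom {N : ℕ} (q : Fin N → ℂ) (t : ℝ) :
    trigPoly q t = q ⬝ᵥ star (atom N t) := by
  refine Finset.sum_congr rfl fun n _ => ?_
  simp only [Pi.star_apply, atom, RCLike.star_def, ← Complex.exp_conj, map_mul, map_ofNat,
    Complex.conj_ofReal, Complex.conj_I, Complex.conj_natCast]
  ring_nf

lemma dotProduct_star_sum_smul_atom {N P : ℕ} (q : Fin N → ℂ) (c : Fin P → ℂ) (τ : Fin P → ℝ) :
    q ⬝ᵥ star (∑ k, c k • atom N (τ k)) = ∑ k, star (c k) * trigPoly q (τ k) := by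
  simp only [star_sum, star_smul, dotProduct_sum, dotProduct_smul, smul_eq_mul,
    trigPoly_eq_dotProduct_star_atom]

lemma sum_smul_atom_apply_zero {N P : ℕ} (hN : 0 < N) (c : Fin P → ℂ) (τ : Fin P → ℝ) :
    (∑ k, c k • atom N (τ k)) ⟨0, hN⟩ = ∑ k, c k := by
  simp [Finset.sum_apply, atom]

lemma dotProduct_star_congr_of_eqOn_support {N : ℕ} {Ω : Finset (Fin N)} {q x y : Fin N → ℂ}
    (hq : ∀ j, j ∉ Ω → q j = 0) (hxy : ∀ j ∈ Ω, x j = y j) :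
    q ⬝ᵥ star x = q ⬝ᵥ star y := by
  refine Finset.sum_congr rfl fun j _ => ?_
  by_cases hj : j ∈ Ω
  · simp only [Pi.star_apply, hxy j hj]
  · simp only [hq j hj, zero_mul]

lemma eq_one_of_sum_mul_eq_sum {ι : Type*} [Fintype ι] {w f : ι → ℝ} (hw : ∀ k, 0 < w k)
    (hf : ∀ k, f k ≤ 1) (hsum : ∑ k, w k * f k = ∑ k, w k) (k : ι) : f k = 1 := by
  have hdefect : ∑ k, w k * (1 - f k) = 0 := by
    simp only [mul_sub, mul_one, Finset.sum_sub_distrib, hsum, sub_self]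
  have hk := (Finset.sum_eq_zero_iff_of_nonneg fun k _ =>
    mul_nonneg (hw k).le (sub_nonneg.mpr (hf k))).mp hdefect k (Finset.mem_univ k)
  have := (mul_eq_zero.mp hk).resolve_left (hw k).ne'
  linarith

theorem alternative_solution_atoms_saturate_dual_polynomial_general
    (N M' p m ptilde : ℕ) (hN : 0 < N)
    (Ω : Finset (Fin N))
    (M : Matrix (Fin M') (Fin N) ℂ)
    (τ : Fin p → ℝ)
    (c : Fin p → ℝ)
    (xstar : Fin N → ℂ)
    (hx : xstar = ∑ k : Fin p, (c k : ℂ) • atom N (τ k))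
    (q : Fin N → ℂ) (u : Fin m → Fin M' → ℂ)
    (h2 : ∀ k : Fin p, (trigPoly q (τ k)).re = 1)
    (h3 : ∀ j : Fin N, j ∉ Ω → q j = 0)
    (h4 : ∀ t ∈ Set.Ico (0 : ℝ) 1,
      1 - (trigPoly q t).re = ∑ i : Fin m, ‖trigPoly (Mᴴ *ᵥ u i) t‖ ^ 2)
    (τt : Fin ptilde → ℝ) (hτt : ∀ k, τt k ∈ Set.Ico (0 : ℝ) 1)
    (ct : Fin ptilde → ℝ) (hct : ∀ k, 0 < ct k)
    (xt : Fin N → ℂ)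
    (hxt : xt = ∑ k : Fin ptilde, (ct k : ℂ) • atom N (τt k))
    (hfeas : ∀ j ∈ Ω, xt j = xstar j)
    (hopt : (xt ⟨0, hN⟩).re = (xstar ⟨0, hN⟩).re) :
    ∀ k : Fin ptilde, (trigPoly q (τt k)).re = 1 := by
  have hle : ∀ k, (trigPoly q (τt k)).re ≤ 1 := fun k => by
    have := h4 (τt k) (hτt k)
    have : 0 ≤ ∑ i, ‖trigPoly (Mᴴ *ᵥ u i) (τt k)‖ ^ 2 := by positivity
    linarith
  -- `q` only sees the entries in `Ω`, where `xt` and `xstar` agree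
  have hpair := congrArg Complex.re (dotProduct_star_congr_of_eqOn_support h3 hfeas)
  rw [hxt, hx, dotProduct_star_sum_smul_atom, dotProduct_star_sum_smul_atom] at hpair
  rw [hxt, hx, sum_smul_atom_apply_zero, sum_smul_atom_apply_zero] at hopt
  simp only [Complex.re_sum, Complex.star_def, Complex.conj_ofReal, Complex.re_ofReal_mul, h2,
    mul_one, Complex.ofReal_re] at hpair hopt
  exact eq_one_of_sum_mul_eq_sum hct hle (hpair.trans hopt.symm)

theorem alternative_solution_atoms_saturate_dual_polynomial
    (N M' p m ptilde : ℕ) (hN : 0 < N) (hp : 0 < p)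
    (Ω : Finset (Fin N))
    (M : Matrix (Fin M') (Fin N) ℂ)
    (τ : Fin p → ℝ) (hτ : ∀ k, τ k ∈ Set.Ico (0 : ℝ) 1)
    (hinj : Function.Injective τ)
    (c : Fin p → ℝ) (hc : ∀ k, 0 < c k)
    (xstar : Fin N → ℂ)
    (hx : xstar = ∑ k : Fin p, (c k : ℂ) • atom N (τ k))
    (q : Fin N → ℂ) (u : Fin m → Fin M' → ℂ)
    (h2 : ∀ k : Fin p, (trigPoly q (τ k)).re = 1)
    (h3 : ∀ j : Fin N, j ∉ Ω → q j = 0)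
    (h4 : ∀ t ∈ Set.Ico (0 : ℝ) 1,
      1 - (trigPoly q t).re = ∑ i : Fin m, ‖trigPoly (Mᴴ *ᵥ u i) t‖ ^ 2)
    (τt : Fin ptilde → ℝ) (hτt : ∀ k, τt k ∈ Set.Ico (0 : ℝ) 1)
    (ct : Fin ptilde → ℝ) (hct : ∀ k, 0 < ct k)
    (xt : Fin N → ℂ)
    (hxt : xt = ∑ k : Fin ptilde, (ct k : ℂ) • atom N (τt k))
    (hfeas : ∀ j ∈ Ω, xt j = xstar j)
    (hpsd : (M * Toep xt * Mᴴ).PosSemidef)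
    (hopt : (xt ⟨0, hN⟩).re = (xstar ⟨0, hN⟩).re) :
    ∀ k : Fin ptilde, (trigPoly q (τt k)).re = 1 :=
  alternative_solution_atoms_saturate_dual_polynomial_general N M' p m ptilde hN Ω M τ c xstar hx q
    u h2 h3 h4 τt hτt ct hct xt hxt hfeas hopt
end

section
/- Let N ≥ 1, let Ω ⊆ {0,…,N−1}, and let M ∈ ℂ^{M×N}. Let x ∈ ℂ^N be such that M T(x) M^H is positive semidefinite, let S ∈ ℂ^{M×M} be positive semidefinite, and let q ∈ ℂ^N satisfy q_j = 0 for all j ∉ Ω and T*(M^H S M) + K q = e_0. Then Re( ∑_{j ∈ Ω} x_j · conj(q_j) ) ≤ Re(x_0). -/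
open Complex Matrix BigOperators
open scoped ComplexOrder

/-- The adjoint `T*` of the Hermitian Toeplitz operator:
`T*(H)ⱼ = ∑_{ℓ=0}^{N−1−j} H_{j+ℓ,ℓ}`. -/
noncomputable def Tstar {N : ℕ} (H : Matrix (Fin N) (Fin N) ℂ) : Fin N → ℂ :=
  fun j => ∑ ℓ : Fin N,
    if h : (j : ℕ) + (ℓ : ℕ) < N then H ⟨(j : ℕ) + (ℓ : ℕ), h⟩ ℓ else 0

/-!
Write `H = Mᴴ S M`. The pairing `Re tr(H T(x))` is nonnegative, since by cyclicity it is the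
trace of the product `S · (M T(x) Mᴴ)` of two positive semidefinite matrices. Expanding the trace
along the diagonals of `T(x)` and using that `H` is Hermitian gives
`Re tr(H T(x)) = Re ∑ⱼ xⱼ conj((K⁻¹ T*(H))ⱼ)`, and feasibility says `K⁻¹ T*(H) = e₀ − q`.
-/

open ComplexConjugate

theorem Matrix.PosSemidef.trace_mul_nonneg {n 𝕜 : Type*} [Fintype n] [RCLike 𝕜]
    {A B : Matrix n n 𝕜} (hA : A.PosSemidef) (hB : B.PosSemidef) : 0 ≤ (A * B).trace := by
  classical
  open scoped MatrixOrder in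
  obtain ⟨C, rfl⟩ := CStarAlgebra.nonneg_iff_eq_star_mul_self.mp hB.nonneg
  rw [← Matrix.mul_assoc, trace_mul_comm, ← Matrix.mul_assoc]
  exact (hA.mul_mul_conjTranspose_same C).trace_nonneg

theorem Fin.sum_ite_val_eq {β : Type*} [AddCommMonoid β] {N : ℕ} (k : ℕ) (f : Fin N → β) :
    ∑ m : Fin N, (if (m : ℕ) = k then f m else 0) = if h : k < N then f ⟨k, h⟩ else 0 := by
  split_ifs with h
  · simp_rw [← Fin.ext_iff (b := ⟨k, h⟩), Finset.sum_ite_eq', Finset.mem_univ, if_true]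
  · exact Finset.sum_eq_zero fun m _ => if_neg (by omega)

theorem Fin.sum_ite_val_eq_add {β : Type*} [AddCommMonoid β] {N : ℕ} (m n : Fin N)
    (f : Fin N → β) :
    ∑ j : Fin N, (if (m : ℕ) = j + n then f j else 0) =
      if h : (n : ℕ) ≤ m then f ⟨m - n, by omega⟩ else 0 := by
  split_ifs with h
  · simp_rw [show ∀ j : Fin N, ((m : ℕ) = j + n ↔ (j : ℕ) = m - n) by omega,
      Fin.sum_ite_val_eq, dif_pos (show (m : ℕ) - n < N by omega)]
  · exact Finset.sum_eq_zero fun j _ => if_neg (by omega)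

section Toeplitz

variable {N : ℕ}

theorem Tstar_apply_eq_sum (H : Matrix (Fin N) (Fin N) ℂ) (j : Fin N) :
    Tstar H j = ∑ m : Fin N, ∑ n : Fin N, if (m : ℕ) = j + n then H m n else 0 := by
  rw [Finset.sum_comm]
  exact Finset.sum_congr rfl fun n _ => (Fin.sum_ite_val_eq _ (H · n)).symm

theorem trace_mul_Toep (H : Matrix (Fin N) (Fin N) ℂ) (x : Fin N → ℂ) :
    (H * Toep x).trace = ∑ j, x j * conj (Tstar Hᴴ j) +
      ∑ j : Fin N, (if (j : ℕ) = 0 then 0 else conj (x j)) * Tstar H j := by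
  have lower : ∑ j, x j * conj (Tstar Hᴴ j) =
      ∑ m : Fin N, ∑ n : Fin N,
        if h : (n : ℕ) ≤ m then x ⟨m - n, by omega⟩ * H n m else 0 := by
    simp_rw [Tstar_apply_eq_sum, map_sum, apply_ite conj, conjTranspose_apply, map_zero,
      RCLike.star_def, conj_conj, Finset.mul_sum, mul_ite, mul_zero]
    rw [Finset.sum_comm]
    refine Finset.sum_congr rfl fun m _ => ?_
    rw [Finset.sum_comm]
    exact Finset.sum_congr rfl fun n _ => Fin.sum_ite_val_eq_add m n (x · * H n m)
  have upper : ∑ j : Fin N, (if (j : ℕ) = 0 then 0 else conj (x j)) * Tstar H j =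
      ∑ m : Fin N, ∑ n : Fin N,
        if h : (n : ℕ) ≤ m then (if (m : ℕ) - n = 0 then 0 else
          conj (x ⟨m - n, by omega⟩)) * H m n else 0 := by
    simp_rw [Tstar_apply_eq_sum, Finset.mul_sum, mul_ite, mul_zero]
    rw [Finset.sum_comm]
    refine Finset.sum_congr rfl fun m _ => ?_
    rw [Finset.sum_comm]
    exact Finset.sum_congr rfl fun n _ =>
      Fin.sum_ite_val_eq_add m n (fun j => (if (j : ℕ) = 0 then 0 else conj (x j)) * H m n)
  rw [lower, upper, Finset.sum_comm (f := fun m n => dite _ _ _), ← Finset.sum_add_distrib]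
  simp only [trace, diag_apply, mul_apply]
  refine Finset.sum_congr rfl fun m _ => ?_
  rw [← Finset.sum_add_distrib]
  refine Finset.sum_congr rfl fun n _ => ?_
  unfold Toep
  split_ifs <;> first | omega | simp [mul_comm]

theorem re_trace_mul_Toep_of_isHermitian {H : Matrix (Fin N) (Fin N) ℂ}
    (hH : H.IsHermitian) (x : Fin N → ℂ) :
    (H * Toep x).trace.re =
      ∑ j : Fin N, (x j * conj ((if (j : ℕ) = 0 then 1 else 2) * Tstar H j)).re := by
  rw [trace_mul_Toep, hH.eq, add_re, re_sum, re_sum, ← Finset.sum_add_distrib]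
  refine Finset.sum_congr rfl fun j _ => ?_
  split_ifs
  · simp
  · simp only [map_mul, map_ofNat, mul_re, conj_re, conj_im]
    norm_num
    ring

end Toeplitz

theorem weak_duality_compressed_ANM
    (N M' : ℕ) (hN : 0 < N)
    (Ω : Finset (Fin N))
    (M : Matrix (Fin M') (Fin N) ℂ)
    (x : Fin N → ℂ) (hx : (M * Toep x * Mᴴ).PosSemidef)
    (S : Matrix (Fin M') (Fin M') ℂ) (hS : S.PosSemidef)
    (q : Fin N → ℂ)
    (hq : ∀ j : Fin N, j ∉ Ω → q j = 0)
    (hfeas : ∀ j : Fin N,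
      Tstar (Mᴴ * S * M) j + (if (j : ℕ) = 0 then 1 else (1 / 2 : ℂ)) * q j =
        (if (j : ℕ) = 0 then 1 else 0)) :
    (∑ j ∈ Ω, x j * (starRingEnd ℂ) (q j)).re ≤ (x ⟨0, hN⟩).re := by
  set H := Mᴴ * S * M
  have hH : H.IsHermitian := by
    simp [H, IsHermitian, conjTranspose_mul, hS.isHermitian.eq, Matrix.mul_assoc]
  have pairing_nonneg : 0 ≤ (H * Toep x).trace.re := by
    have h : (H * Toep x).trace = (S * (M * Toep x * Mᴴ)).trace := by
      simp only [H, Matrix.mul_assoc]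
      rw [trace_mul_comm]
      simp only [Matrix.mul_assoc]
    rw [h]
    exact (RCLike.nonneg_iff.mp (hS.trace_mul_nonneg hx)).1
  have weighted : ∀ j : Fin N, (if (j : ℕ) = 0 then 1 else 2) * Tstar H j =
      (if (j : ℕ) = 0 then 1 else 0) - q j := by
    intro j
    have h := hfeas j
    split_ifs at h ⊢
    · linear_combination h
    · linear_combination 2 * h
  have support : ∑ j ∈ Ω, x j * conj (q j) = ∑ j, x j * conj (q j) :=
    Finset.sum_subset (Finset.subset_univ Ω) fun j _ hj => by simp [hq j hj]
  have pairing_eq : (H * Toep x).trace.re = (x ⟨0, hN⟩).re - (∑ j, x j * conj (q j)).re := by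
    simp_rw [re_trace_mul_Toep_of_isHermitian hH, weighted, map_sub, mul_sub, sub_re,
      Finset.sum_sub_distrib, re_sum, apply_ite conj, map_one, map_zero, mul_ite, mul_one,
      mul_zero, apply_ite re, zero_re, Fin.sum_ite_val_eq, dif_pos hN]
  rw [support]
  linarith
end
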